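/- Let R be a commutative ring and p : E → B a chain map of chain complexes of R-modules. For n ∈ ℤ let Q_n = {(b, z) ∈ B_n × Z_{n−1}(E) : d(b) = p(z)} be the pullback of d : B_n → Z_{n−1}(B) and p : Z_{n−1}(E) → Z_{n−1}(B). Then there exist R-linear maps η_n : Q_n → E_n with p(η_n(b,z)) = b and d(η_n(b,z)) = z for all (b,z) ∈ Q_n and all n, if and only if p is a degreewise split epimorphism and a homotopy equivalence. -/

import Mathlib

open CategoryTheory

variable (R : Type) [CommRing R]

/-- Concrete chain homotopy from `u` to `v`: `d ∘ sₙ + sₙ₋₁ ∘ d = uₙ - vₙ`. -/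
def IsHomotopy {X Y : ChainComplex (ModuleCat R) ℤ} (u v : X ⟶ Y)
    (s : ∀ n : ℤ, X.X n ⟶ Y.X (n + 1)) : Prop :=
  ∀ n : ℤ, s n ≫ Y.d (n + 1) n +
      X.d n (n - 1) ≫ s (n - 1) ≫ eqToHom (congrArg Y.X (show n - 1 + 1 = n by omega)) =
    u.f n - v.f n

/-- Two chain maps are chain homotopic. -/
def Homotopic {X Y : ChainComplex (ModuleCat R) ℤ} (u v : X ⟶ Y) : Prop :=
  ∃ s, IsHomotopy R u v s

/-- A chain map is a homotopy equivalence: it admits an inverse up to chain homotopy. -/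
def IsHtpyEquiv {X Y : ChainComplex (ModuleCat R) ℤ} (f : X ⟶ Y) : Prop :=
  ∃ g : Y ⟶ X, Homotopic R (f ≫ g) (𝟙 X) ∧ Homotopic R (g ≫ f) (𝟙 Y)

/-- Degreewise split monomorphism: each `iₙ` admits an `R`-linear retraction. -/
def DegSplitMono {W Y : ChainComplex (ModuleCat R) ℤ} (i : W ⟶ Y) : Prop :=
  ∀ n : ℤ, ∃ r : Y.X n →ₗ[R] W.X n, ∀ w : W.X n, r (i.f n w) = w

/-- Degreewise split epimorphism: each `pₙ` admits an `R`-linear section. -/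
def DegSplitEpi {E B : ChainComplex (ModuleCat R) ℤ} (p : E ⟶ B) : Prop :=
  ∀ n : ℤ, ∃ s : B.X n →ₗ[R] E.X n, ∀ b : B.X n, p.f n (s b) = b


/-- The pullback `Qₙ = {(b, z) ∈ Bₙ × Z_{n-1}(E) : d(b) = p(z)}`. -/
def Qsub {E B : ChainComplex (ModuleCat R) ℤ} (p : E ⟶ B) (n : ℤ) :
    Submodule R (B.X n × E.X (n - 1)) where
  carrier := {bz | E.d (n - 1) (n - 1 - 1) bz.2 = 0 ∧ B.d n (n - 1) bz.1 = p.f (n - 1) bz.2}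
  add_mem' := by
    rintro a b ⟨ha1, ha2⟩ ⟨hb1, hb2⟩
    constructor <;> simp_all [Prod.fst_add, Prod.snd_add, map_add]
  zero_mem' := by constructor <;> simp
  smul_mem' := by
    rintro c a ⟨ha1, ha2⟩
    constructor <;> simp_all [Prod.smul_fst, Prod.smul_snd, map_smul]

/-!
A family `η` is a lifting property of `p` against the disks, linear in the boundary data.
Given `η`, every chain map `f : X ⟶ B` lifts through `p` by filling twice,
`x ↦ η (f x, η (f (d x), 0))`; lifting `𝟙 B` gives a section `g`. Two maps `u v : X ⟶ E`
with `u ≫ p = v ≫ p` are homotopic: with `φ = u - v`, the element `φ x - η (0, φ (d x))` is a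
cycle over `0`, and filling it gives the homotopy. Applied to `p ≫ g` and `𝟙 E`, this makes `g`
a homotopy inverse.

Conversely, let `t` be a degreewise section, `g` a homotopy inverse and `s : p ≫ g ≃ 𝟙`,
`s' : g ≫ p ≃ 𝟙`. For `(b, z) ∈ Qₙ`, `k = d (t b) - z` is a cycle in the kernel of `p`, so
`y = s k` satisfies `d y = -k`, and `t b + y` has boundary `z`. It lies over `b + p y`, where
`p y` is a cycle; a cycle `c` of `B` lifts to the cycle `g c - d (t (s' c))` of `E`, and
subtracting the lift of `p y` gives `η (b, z)`.
-/
variable {R}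

section Casts

variable {X Y : ChainComplex (ModuleCat R) ℤ}

lemma d_eqToHom_apply {a b : ℤ} (h : a = b) (k : ℤ) (x : X.X a) :
    X.d b k (eqToHom (congrArg X.X h) x) = X.d a k x := by
  subst h; rfl

lemma eqToHom_symm_eqToHom_apply {a b : ℤ} (h : a = b) (x : X.X a) :
    eqToHom (congrArg X.X h.symm) (eqToHom (congrArg X.X h) x) = x := by
  subst h; rfl

lemma apply_eqToHom_sub_one {a b : ℤ} (h : a = b) (t : ∀ m : ℤ, X.X (m - 1) →ₗ[R] Y.X m)
    (x : X.X (a - 1)) :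
    t b (eqToHom (congrArg X.X (congrArg (· - 1) h)) x) = eqToHom (congrArg Y.X h) (t a x) := by
  subst h; rfl

/-- Indexing a homotopy as `X (m - 1) ⟶ Y m`, rather than `X n ⟶ Y (n + 1)`, avoids the casts
`Y (n - 1 + 1) = Y n` in its defining equation. -/
theorem homotopic_of_shifted {u v : X ⟶ Y} (t : ∀ m : ℤ, X.X (m - 1) →ₗ[R] Y.X m)
    (ht : ∀ (m : ℤ) (x : X.X (m - 1)),
      Y.d m (m - 1) (t m x) + t (m - 1) (X.d (m - 1) (m - 1 - 1) x) =
        u.f (m - 1) x - v.f (m - 1) x) :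
    Homotopic R u v := by
  refine ⟨fun n => ModuleCat.ofHom
    (t (n + 1) ∘ₗ (eqToHom (congrArg X.X (show n = n + 1 - 1 by omega))).hom), fun n => ?_⟩
  ext x
  obtain ⟨m, rfl⟩ : ∃ m, n = m - 1 := ⟨n + 1, by omega⟩
  change Y.d (m - 1 + 1) (m - 1) (t (m - 1 + 1) (eqToHom (congrArg X.X (by omega)) x)) +
      eqToHom (congrArg Y.X (by omega))
        (t (m - 1 - 1 + 1) (eqToHom (congrArg X.X (by omega)) (X.d (m - 1) (m - 1 - 1) x))) =
    u.f (m - 1) x - v.f (m - 1) x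
  rw [apply_eqToHom_sub_one (show m = m - 1 + 1 by omega), d_eqToHom_apply (by omega),
    apply_eqToHom_sub_one (show m - 1 = m - 1 - 1 + 1 by omega),
    eqToHom_symm_eqToHom_apply (show m - 1 = m - 1 - 1 + 1 by omega)]
  exact ht m x

end Casts

section Elementwise

variable {X Y : ChainComplex (ModuleCat R) ℤ}

@[simp]
lemma d_d_apply (i j k : ℤ) (x : X.X i) : X.d j k (X.d i j x) = 0 := by
  rw [← ModuleCat.comp_apply, X.d_comp_d]; rfl

lemma hom_d_apply (f : X ⟶ Y) (i j : ℤ) (x : X.X i) : f.f j (X.d i j x) = Y.d i j (f.f i x) := by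
  rw [← ModuleCat.comp_apply, ← f.comm, ModuleCat.comp_apply]

lemma comp_sub_apply_eq_zero {Z : ChainComplex (ModuleCat R) ℤ} {u v : X ⟶ Y} {p : Y ⟶ Z}
    (huv : u ≫ p = v ≫ p) (n : ℤ) (x : X.X n) : p.f n (u.f n x - v.f n x) = 0 := by
  rw [map_sub, ← ModuleCat.comp_apply, ← ModuleCat.comp_apply, ← HomologicalComplex.comp_f,
    ← HomologicalComplex.comp_f, huv, sub_self]

end Elementwise

section Homotopies

variable {X Y : ChainComplex (ModuleCat R) ℤ}

theorem homotopic_of_eq {u v : X ⟶ Y} (h : u = v) : Homotopic R u v :=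
  ⟨0, fun n => by simp [h]⟩

lemma IsHomotopy.d_apply_of_d_eq_zero {u v : X ⟶ Y} {s : ∀ n : ℤ, X.X n ⟶ Y.X (n + 1)}
    (hs : IsHomotopy R u v s) {n : ℤ} {x : X.X n} (hx : X.d n (n - 1) x = 0) :
    Y.d (n + 1) n (s n x) = u.f n x - v.f n x := by
  simpa [hx] using LinearMap.congr_fun (congrArg ModuleCat.Hom.hom (hs n)) x

end Homotopies

theorem degSplitEpi_of_comp_eq_id {E B : ChainComplex (ModuleCat R) ℤ} {p : E ⟶ B} {g : B ⟶ E}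
    (h : g ≫ p = 𝟙 B) : DegSplitEpi R p :=
  fun n => ⟨(g.f n).hom, fun b => by simp [← ModuleCat.comp_apply, ← HomologicalComplex.comp_f, h]⟩

lemma mem_Qsub {E B : ChainComplex (ModuleCat R) ℤ} {p : E ⟶ B} {n : ℤ} {b : B.X n}
    {z : E.X (n - 1)} :
    (b, z) ∈ Qsub R p n ↔ E.d (n - 1) (n - 1 - 1) z = 0 ∧ B.d n (n - 1) b = p.f (n - 1) z :=
  Iff.rfl

structure DiskFiller {E B : ChainComplex (ModuleCat R) ℤ} (p : E ⟶ B) where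
  η : ∀ n : ℤ, Qsub R p n →ₗ[R] E.X n
  p_η : ∀ (n : ℤ) (q : Qsub R p n), p.f n (η n q) = (q : B.X n × E.X (n - 1)).1
  d_η : ∀ (n : ℤ) (q : Qsub R p n), E.d n (n - 1) (η n q) = (q : B.X n × E.X (n - 1)).2

namespace DiskFiller

variable {E B : ChainComplex (ModuleCat R) ℤ} {p : E ⟶ B} (F : DiskFiller p)

section Fill

variable {M : Type*} [AddCommGroup M] [Module R M] {n : ℤ}

def fill (b : M →ₗ[R] B.X n) (z : M →ₗ[R] E.X (n - 1)) (h : ∀ x, (b x, z x) ∈ Qsub R p n) :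
    M →ₗ[R] E.X n :=
  F.η n ∘ₗ (b.prod z).codRestrict _ h

variable {b : M →ₗ[R] B.X n} {z : M →ₗ[R] E.X (n - 1)} {h : ∀ x, (b x, z x) ∈ Qsub R p n}

@[simp]
lemma p_fill (x : M) : p.f n (F.fill b z h x) = b x :=
  F.p_η n _

@[simp]
lemma d_fill (x : M) : E.d n (n - 1) (F.fill b z h x) = z x :=
  F.d_η n _

lemma fill_apply_eq {M' : Type*} [AddCommGroup M'] [Module R M'] {b' : M' →ₗ[R] B.X n}
    {z' : M' →ₗ[R] E.X (n - 1)} {h' : ∀ x, (b' x, z' x) ∈ Qsub R p n} {x : M} {x' : M'}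
    (hb : b x = b' x') (hz : z x = z' x') : F.fill b z h x = F.fill b' z' h' x' :=
  congrArg (F.η n) (Subtype.ext (Prod.ext hb hz))

lemma fill_apply_eq_zero {x : M} (hb : b x = 0) (hz : z x = 0) : F.fill b z h x = 0 := by
  rw [show F.fill b z h x = F.η n 0 from congrArg (F.η n) (Subtype.ext (Prod.ext hb hz)), map_zero]

end Fill

section Lift

variable {X : ChainComplex (ModuleCat R) ℤ} (f : X ⟶ B)

def boundaryLift (n : ℤ) : X.X n →ₗ[R] E.X (n - 1) :=
  F.fill ((f.f (n - 1)).hom ∘ₗ (X.d n (n - 1)).hom) 0 fun x =>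
    mem_Qsub.2 ⟨map_zero _, by simp [hom_d_apply]⟩

def liftHom : X ⟶ E where
  f n := ModuleCat.ofHom <| F.fill (f.f n).hom (F.boundaryLift f n) fun x =>
    mem_Qsub.2 ⟨by simp [boundaryLift], by simp [boundaryLift, hom_d_apply]⟩
  comm' i j hij := by
    obtain rfl : j = i - 1 := by simp at hij; omega
    ext x
    change E.d i (i - 1) (F.fill _ _ _ x) = F.fill _ _ _ (X.d i (i - 1) x)
    rw [d_fill]
    exact F.fill_apply_eq rfl (F.fill_apply_eq_zero (by simp) rfl).symm

lemma liftHom_comp : F.liftHom f ≫ p = f := by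
  ext n x
  exact F.p_fill x

end Lift

section Homotopy

variable {X : ChainComplex (ModuleCat R) ℤ}
variable {u v : X ⟶ E} (huv : u ≫ p = v ≫ p)
include huv

def boundaryFill (n : ℤ) : X.X n →ₗ[R] E.X n :=
  F.fill 0 ((u.f (n - 1) - v.f (n - 1)).hom ∘ₗ (X.d n (n - 1)).hom) fun x =>
    mem_Qsub.2 ⟨by simp [hom_d_apply], by simp [comp_sub_apply_eq_zero huv]⟩

def homotopyFill (m : ℤ) : X.X (m - 1) →ₗ[R] E.X m :=
  F.fill 0 ((u.f (m - 1) - v.f (m - 1)).hom - F.boundaryFill huv (m - 1)) fun x =>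
    mem_Qsub.2 ⟨by simp [boundaryFill, hom_d_apply],
      by simp [boundaryFill, comp_sub_apply_eq_zero huv]⟩

include F in
theorem homotopic_of_comp_eq : Homotopic R u v := by
  refine homotopic_of_shifted (F.homotopyFill huv) fun m x => ?_
  have hσ : F.boundaryFill huv (m - 1 - 1) (X.d (m - 1) (m - 1 - 1) x) = 0 :=
    F.fill_apply_eq_zero rfl (by simp)
  have hdx : F.homotopyFill huv (m - 1) (X.d (m - 1) (m - 1 - 1) x) =
      F.boundaryFill huv (m - 1) x :=
    F.fill_apply_eq rfl (by simp [hσ])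
  rw [hdx, homotopyFill, d_fill]
  simp

end Homotopy

end DiskFiller

section OfSplitting

variable {E B : ChainComplex (ModuleCat R) ℤ} {p : E ⟶ B} (t : ∀ n : ℤ, B.X n →ₗ[R] E.X n)
  (g : B ⟶ E) (s : ∀ n : ℤ, E.X n ⟶ E.X (n + 1)) (s' : ∀ n : ℤ, B.X n ⟶ B.X (n + 1))

def cycleLift (n : ℤ) : B.X n →ₗ[R] E.X n :=
  (g.f n).hom - (E.d (n + 1) n).hom ∘ₗ t (n + 1) ∘ₗ (s' n).hom

def liftOfSplitting (n : ℤ) : Qsub R p n →ₗ[R] E.X n :=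
  let b := LinearMap.fst R (B.X n) (E.X (n - 1)) ∘ₗ (Qsub R p n).subtype
  let z := LinearMap.snd R (B.X n) (E.X (n - 1)) ∘ₗ (Qsub R p n).subtype
  let y := (eqToHom (congrArg E.X (sub_add_cancel n 1))).hom ∘ₗ (s (n - 1)).hom ∘ₗ
    ((E.d n (n - 1)).hom ∘ₗ t n ∘ₗ b - z)
  t n ∘ₗ b + y - cycleLift t g s' n ∘ₗ (p.f n).hom ∘ₗ y

variable {t g s s'} (ht : ∀ (n : ℤ) (b : B.X n), p.f n (t n b) = b)

include ht in
lemma p_cycleLift (hs' : IsHomotopy R (g ≫ p) (𝟙 B) s') {n : ℤ} {c : B.X n}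
    (hc : B.d n (n - 1) c = 0) : p.f n (cycleLift t g s' n c) = c := by
  have h := hs'.d_apply_of_d_eq_zero hc
  simp only [HomologicalComplex.comp_f, HomologicalComplex.id_f] at h
  simp [cycleLift, hom_d_apply, ht, h]

lemma d_cycleLift {n : ℤ} {c : B.X n} (hc : B.d n (n - 1) c = 0) :
    E.d n (n - 1) (cycleLift t g s' n c) = 0 := by
  simp [cycleLift, ← hom_d_apply, hc]

include ht in
theorem liftOfSplitting_spec (hs : IsHomotopy R (p ≫ g) (𝟙 E) s)
    (hs' : IsHomotopy R (g ≫ p) (𝟙 B) s') (n : ℤ) (q : Qsub R p n) :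
    p.f n (liftOfSplitting t g s s' n q) = (q : B.X n × E.X (n - 1)).1 ∧
      E.d n (n - 1) (liftOfSplitting t g s s' n q) = (q : B.X n × E.X (n - 1)).2 := by
  obtain ⟨⟨b, z⟩, hz, hb⟩ := q
  set k := E.d n (n - 1) (t n b) - z
  have hk_d : E.d (n - 1) (n - 1 - 1) k = 0 := by simp [k, hz]
  have hk_p : p.f (n - 1) k = 0 := by simp [k, hom_d_apply, ht, hb]
  set y := eqToHom (congrArg E.X (sub_add_cancel n 1)) (s (n - 1) k)
  have hy : E.d n (n - 1) y = -k := by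
    simp [y, d_eqToHom_apply, hs.d_apply_of_d_eq_zero hk_d, hk_p]
  have hpy : B.d n (n - 1) (p.f n y) = 0 := by simp [← hom_d_apply, hy, hk_p]
  change p.f n (t n b + y - cycleLift t g s' n (p.f n y)) = b ∧
    E.d n (n - 1) (t n b + y - cycleLift t g s' n (p.f n y)) = z
  constructor
  · simp [ht, p_cycleLift ht hs' hpy]
  · simp [hy, d_cycleLift hpy, k]

end OfSplitting

/-- There are `R`-linear maps `ηₙ : Qₙ → Eₙ` with `p ∘ ηₙ = pr₁` and `d ∘ ηₙ = pr₂` iff `p` is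
a degreewise split epimorphism and a homotopy equivalence. -/
theorem statement7 (R : Type) [CommRing R] {E B : ChainComplex (ModuleCat R) ℤ} (p : E ⟶ B) :
    (∃ η : ∀ n : ℤ, Qsub R p n →ₗ[R] E.X n,
      ∀ (n : ℤ) (q : Qsub R p n),
        p.f n (η n q) = (q : B.X n × E.X (n - 1)).1 ∧
          E.d n (n - 1) (η n q) = (q : B.X n × E.X (n - 1)).2) ↔
    (DegSplitEpi R p ∧ IsHtpyEquiv R p) := by
  constructor
  · rintro ⟨η, hη⟩
    let F : DiskFiller p := ⟨η, fun n q => (hη n q).1, fun n q => (hη n q).2⟩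
    have hsection : F.liftHom (𝟙 B) ≫ p = 𝟙 B := F.liftHom_comp (𝟙 B)
    refine ⟨degSplitEpi_of_comp_eq_id hsection, F.liftHom (𝟙 B), ?_, homotopic_of_eq hsection⟩
    exact F.homotopic_of_comp_eq <| by
      rw [Category.assoc, hsection, Category.comp_id, Category.id_comp]
  · rintro ⟨hsplit, g, ⟨s, hs⟩, ⟨s', hs'⟩⟩
    choose t ht using hsplit
    exact ⟨liftOfSplitting t g s s', liftOfSplitting_spec ht hs hs'⟩
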